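/- For every z with 0 < z < 1, the series Σ_{i=1}^{∞} binom(−1/2, i) (−1)^i [ ((−1/2 − i)/(1/2 − i)) (z^{i − 1/2} − 1) − (z^{i + 1/2} − 1) ] converges and equals −2 + (3/2) z^{1/2} + z^{3/2}/(2 (1 + √(1 − z))²). -/

import Mathlib

/-!
Write `c n = (-1)ⁿ binom(-1/2, n)` for the Taylor coefficients of `(1 - z)^(-1/2)`. Since
`c (n+1) (2n+3)/(2n+1) = 2 c n - c (n+1)`, the `n`-th summand equals
`(1/√z - √z) c(n+1) z^(n+1) + (2/√z) (c n - c(n+1)) z^(n+1) - 2 (c n - c(n+1))`.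
The three series sum to `(1-z)^(-1/2) - 1`, to `1 - √(1-z)` (Pascal's rule gives
`c n - c (n+1) = (-1)ⁿ binom(1/2, n+1)`), and to `1` (they telescope, and `c n → 0` because
`c n ^ 2 (2n+1) ≤ 1`). The closed form is then an algebraic identity in `√z` and `√(1-z)`.
-/

open Real

noncomputable def genBinom (α : ℝ) (i : ℕ) : ℝ :=
  (∏ k ∈ Finset.range i, (α - k)) / (Nat.factorial i)

open Filter Topology

theorem genBinom_eq_choose (α : ℝ) (n : ℕ) : genBinom α n = Ring.choose α n := by
  rw [Ring.choose_eq_smul, ← Polynomial.aeval_eq_smeval, Polynomial.aeval_def,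
    ← Polynomial.eval_map, descPochhammer_map, descPochhammer_eval_eq_prod_range,
    genBinom, smul_eq_mul, div_eq_inv_mul]

theorem hasSum_genBinom_mul_pow (α : ℝ) {x : ℝ} (hx : |x| < 1) :
    HasSum (fun n ↦ genBinom α n * x ^ n) ((1 + x) ^ α) := by
  have hmem : x ∈ Metric.eball (0 : ℝ) 1 := by
    simpa [← ofReal_norm] using hx
  have := (Real.one_add_rpow_hasFPowerSeriesOnBall_zero (a := α)).hasSum hmem
  simpa [genBinom_eq_choose, binomialSeries, mul_comm] using this

@[simp]
theorem genBinom_zero (α : ℝ) : genBinom α 0 = 1 := by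
  simp [genBinom]

theorem genBinom_succ (α : ℝ) (n : ℕ) :
    genBinom α (n + 1) = genBinom α n * (α - n) / (n + 1) := by
  rw [genBinom, genBinom, Finset.prod_range_succ, Nat.factorial_succ]
  push_cast
  field_simp

theorem genBinom_add_one_succ (α : ℝ) (n : ℕ) :
    genBinom (α + 1) (n + 1) = genBinom α n + genBinom α (n + 1) := by
  simp only [genBinom_eq_choose, Ring.choose_succ_succ]

theorem Antitone.hasSum_sub_succ {f : ℕ → ℝ} (hf : Antitone f) {l : ℝ}
    (hl : Tendsto f atTop (𝓝 l)) : HasSum (fun n ↦ f n - f (n + 1)) (f 0 - l) := by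
  rw [hasSum_iff_tendsto_nat_of_nonneg fun n ↦ sub_nonneg.2 (hf n.le_succ)]
  simpa only [Finset.sum_range_sub'] using tendsto_const_nhds.sub hl

namespace Real

theorem rpow_natCast_add_half {z : ℝ} (hz : 0 < z) (n : ℕ) :
    z ^ ((n : ℝ) + 1/2) = z ^ n * √z := by
  rw [rpow_add hz, rpow_natCast, sqrt_eq_rpow]

theorem rpow_natCast_sub_half {z : ℝ} (hz : 0 < z) (n : ℕ) :
    z ^ ((n : ℝ) - 1/2) = z ^ n / √z := by
  rw [rpow_sub hz, rpow_natCast, sqrt_eq_rpow]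

end Real

noncomputable def invSqrtCoeff (n : ℕ) : ℝ := genBinom (-1/2) n * (-1) ^ n

@[simp]
theorem invSqrtCoeff_zero : invSqrtCoeff 0 = 1 := by
  simp [invSqrtCoeff]

theorem invSqrtCoeff_succ (n : ℕ) :
    invSqrtCoeff (n + 1) = invSqrtCoeff n * (2 * n + 1) / (2 * n + 2) := by
  rw [invSqrtCoeff, invSqrtCoeff, genBinom_succ]
  field_simp
  ring

theorem invSqrtCoeff_pos (n : ℕ) : 0 < invSqrtCoeff n := by
  induction n with
  | zero => simp
  | succ n ih => rw [invSqrtCoeff_succ]; positivity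

theorem invSqrtCoeff_sub_succ (n : ℕ) :
    invSqrtCoeff n - invSqrtCoeff (n + 1) = invSqrtCoeff n / (2 * n + 2) := by
  rw [invSqrtCoeff_succ]
  field_simp
  ring

theorem antitone_invSqrtCoeff : Antitone invSqrtCoeff := by
  refine antitone_nat_of_succ_le fun n ↦ sub_nonneg.1 ?_
  rw [invSqrtCoeff_sub_succ]
  exact (div_pos (invSqrtCoeff_pos n) (by positivity)).le

theorem sq_invSqrtCoeff_mul_le (n : ℕ) : invSqrtCoeff n ^ 2 * (2 * n + 1) ≤ 1 := by
  induction n with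
  | zero => simp
  | succ n ih =>
    have key : invSqrtCoeff n ^ 2 * (2 * n + 1) ^ 2 * (2 * n + 3) ≤ (2 * n + 2) ^ 2 := by
      have hpos : (0 : ℝ) ≤ (2 * n + 1) * (2 * n + 3) := by positivity
      nlinarith [mul_le_mul_of_nonneg_right ih hpos]
    rw [invSqrtCoeff_succ, div_pow, div_mul_eq_mul_div, div_le_one (by positivity)]
    push_cast
    linear_combination key

theorem tendsto_invSqrtCoeff_atTop : Tendsto invSqrtCoeff atTop (𝓝 0) := by
  have hsq : Tendsto (fun n ↦ invSqrtCoeff n ^ 2) atTop (𝓝 0) := by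
    refine squeeze_zero (fun n ↦ sq_nonneg _) (fun n ↦ ?_)
      tendsto_one_div_add_atTop_nhds_zero_nat
    rw [le_div_iff₀ (by positivity)]
    nlinarith [sq_invSqrtCoeff_mul_le n, (n.cast_nonneg : (0 : ℝ) ≤ n)]
  simpa [Real.sqrt_sq (invSqrtCoeff_pos _).le] using hsq.sqrt

theorem hasSum_invSqrtCoeff_sub_succ :
    HasSum (fun n ↦ invSqrtCoeff n - invSqrtCoeff (n + 1)) 1 := by
  simpa using antitone_invSqrtCoeff.hasSum_sub_succ tendsto_invSqrtCoeff_atTop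

theorem hasSum_invSqrtCoeff_mul_pow {z : ℝ} (hz : |z| < 1) :
    HasSum (fun n ↦ invSqrtCoeff n * z ^ n) (√(1 - z))⁻¹ := by
  have h := hasSum_genBinom_mul_pow (-1/2) (x := -z) (by rwa [abs_neg])
  rw [show (1 + -z) ^ (-1/2 : ℝ) = (√(1 - z))⁻¹ by
    rw [← sub_eq_add_neg, neg_div, Real.rpow_neg (by linarith [(abs_lt.1 hz).2]),
      Real.sqrt_eq_rpow]] at h
  exact h.congr_fun fun n ↦ by rw [invSqrtCoeff, neg_pow z, mul_assoc]

theorem hasSum_invSqrtCoeff_succ_mul_pow {z : ℝ} (hz : |z| < 1) :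
    HasSum (fun n ↦ invSqrtCoeff (n + 1) * z ^ (n + 1)) ((√(1 - z))⁻¹ - 1) := by
  simpa using (hasSum_nat_add_iff' 1).2 (hasSum_invSqrtCoeff_mul_pow hz)

theorem hasSum_invSqrtCoeff_sub_succ_mul_pow {z : ℝ} (hz : |z| < 1) :
    HasSum (fun n ↦ (invSqrtCoeff n - invSqrtCoeff (n + 1)) * z ^ (n + 1)) (1 - √(1 - z)) := by
  have h := (hasSum_genBinom_mul_pow (1/2) (x := -z) (by rwa [abs_neg]))
  replace h := ((hasSum_nat_add_iff' 1).2 h).neg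
  rw [← sub_eq_add_neg, ← Real.sqrt_eq_rpow] at h
  simp only [Finset.range_one, Finset.sum_singleton, genBinom_zero, pow_zero, mul_one,
    neg_sub] at h
  refine h.congr_fun fun n ↦ ?_
  rw [show (1/2 : ℝ) = -1/2 + 1 by norm_num, genBinom_add_one_succ, invSqrtCoeff, invSqrtCoeff]
  ring

theorem invSqrtCoeff_succ_mul_ratio (n : ℕ) :
    invSqrtCoeff (n + 1) * ((-1/2 - ((n : ℝ) + 1)) / (1/2 - ((n : ℝ) + 1)))
      = 2 * invSqrtCoeff n - invSqrtCoeff (n + 1) := by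
  have hn : (0 : ℝ) ≤ n := n.cast_nonneg
  have hratio : (-1/2 - ((n : ℝ) + 1)) / (1/2 - ((n : ℝ) + 1)) = (2 * n + 3) / (2 * n + 1) := by
    rw [div_eq_div_iff (by linarith) (by linarith)]
    ring
  rw [hratio, invSqrtCoeff_succ]
  field_simp
  ring

theorem invSqrtCoeff_succ_mul_eq {z : ℝ} (hz : 0 < z) (n : ℕ) :
    invSqrtCoeff (n + 1) * ((-1/2 - ((n : ℝ) + 1)) / (1/2 - ((n : ℝ) + 1)) *
        (z ^ ((n : ℝ) + 1 - 1/2) - 1) - (z ^ ((n : ℝ) + 1 + 1/2) - 1))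
      = (1/√z - √z) * (invSqrtCoeff (n + 1) * z ^ (n + 1))
        + 2/√z * ((invSqrtCoeff n - invSqrtCoeff (n + 1)) * z ^ (n + 1))
        + -2 * (invSqrtCoeff n - invSqrtCoeff (n + 1)) := by
  have hcast : (n : ℝ) + 1 = (n + 1 : ℕ) := by push_cast; ring
  rw [mul_sub, ← mul_assoc, invSqrtCoeff_succ_mul_ratio, hcast, rpow_natCast_sub_half hz,
    rpow_natCast_add_half hz]
  ring

theorem closedForm_eq_of_sq_add_sq_eq_one {u s : ℝ} (hu : 0 < u) (hs : 0 < s)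
    (h : u ^ 2 + s ^ 2 = 1) :
    (1/u - u) * (s⁻¹ - 1) + 2/u * (1 - s) + -2 * 1
      = -2 + 3/2 * u + u ^ 2 * u / (2 * (1 + s) ^ 2) := by
  field_simp
  linear_combination (-s * u ^ 2 - (1 + s) ^ 2 * (2 + s) - s * (1 - s ^ 2)) * h

theorem stmt_13 (z : ℝ) (hz0 : 0 < z) (hz1 : z < 1) :
    HasSum
      (fun i : ℕ =>
        genBinom (-1/2) (i+1) * (-1)^(i+1) *
          (((-1/2 - ((i:ℝ) + 1)) / (1/2 - ((i:ℝ) + 1))) * (z ^ ((i:ℝ) + 1 - 1/2) - 1) -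
            (z ^ ((i:ℝ) + 1 + 1/2) - 1)))
      (-2 + 3/2 * Real.sqrt z + z ^ ((3:ℝ)/2) / (2 * (1 + Real.sqrt (1 - z))^2)) := by
  have hz : |z| < 1 := abs_lt.2 ⟨by linarith, hz1⟩
  have hsum := (((hasSum_invSqrtCoeff_succ_mul_pow hz).mul_left (1/√z - √z)).add
    ((hasSum_invSqrtCoeff_sub_succ_mul_pow hz).mul_left (2/√z))).add
    (hasSum_invSqrtCoeff_sub_succ.mul_left (-2))
  have hclosed := closedForm_eq_of_sq_add_sq_eq_one (Real.sqrt_pos.2 hz0)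
    (Real.sqrt_pos.2 (by linarith : 0 < 1 - z))
    (by rw [Real.sq_sqrt hz0.le, Real.sq_sqrt (by linarith)]; ring)
  rw [Real.sq_sqrt hz0.le] at hclosed
  have hpow : z ^ ((3:ℝ)/2) = z * √z := by
    rw [show (3:ℝ)/2 = ((1 : ℕ) : ℝ) + 1/2 by norm_num, rpow_natCast_add_half hz0, pow_one]
  rw [hpow, ← hclosed]
  exact hsum.congr_fun fun n ↦ invSqrtCoeff_succ_mul_eq hz0 n
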